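/- Let I ⊂ S be a monomial ideal and I_j its j-th skeleton ideal. Then sdepth S/I ≥ sdepth S/I_j for all 0 ≤ j ≤ dim S/I. -/

import Mathlib

open MvPolynomial

/-- The monomial `x^c = x_1^{c 1} ⋯ x_n^{c n}` in `K[x_1,…,x_n]`. -/
noncomputable def monX (n : ℕ) (K : Type*) [Field K] (c : Fin n → ℕ) :
    MvPolynomial (Fin n) K := ∏ i, X i ^ c i

/-- `ρ(b) = |{k : b k = g k}|`. -/
def rho {n : ℕ} (g b : Fin n → ℕ) : ℕ := (Finset.univ.filter fun k => b k = g k).card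

/-- The `j`-th skeleton ideal of `I` with respect to `g`: the ideal generated by `I`
together with all monomials `x^b` with `ρ(b) > j`. -/
noncomputable def skel {n : ℕ} (K : Type*) [Field K]
    (I : Ideal (MvPolynomial (Fin n) K)) (g : Fin n → ℕ) (j : ℕ) :
    Ideal (MvPolynomial (Fin n) K) :=
  I ⊔ Ideal.span {m | ∃ b : Fin n → ℕ, j < rho g b ∧ m = monX n K b}

/-- The characteristic poset `P^g_{S/I} = {b ∈ ℕ^n : b ≤ g, x^b ∉ I}`. -/
def charPoset {n : ℕ} (K : Type*) [Field K]
    (I : Ideal (MvPolynomial (Fin n) K)) (g : Fin n → ℕ) : Set (Fin n → ℕ) :=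
  {b | b ≤ g ∧ monX n K b ∉ I}

/-- The characteristic poset `P^g_{J/I} = {b ∈ ℕ^n : b ≤ g, x^b ∈ J \ I}`. -/
def charPoset2 {n : ℕ} (K : Type*) [Field K]
    (I J : Ideal (MvPolynomial (Fin n) K)) (g : Fin n → ℕ) : Set (Fin n → ℕ) :=
  {b | b ≤ g ∧ monX n K b ∈ J ∧ monX n K b ∉ I}

/-- The graded maximal ideal `m = (x_1,…,x_n)`. -/
noncomputable def mxId (n : ℕ) (K : Type*) [Field K] : Ideal (MvPolynomial (Fin n) K) :=
  Ideal.span (Set.range (X : Fin n → MvPolynomial (Fin n) K))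

/-- The depth of a module over `S = K[x_1,…,x_n]` with respect to the graded
maximal ideal: the supremum of lengths of regular sequences contained in `m`. -/
noncomputable def mdepth (n : ℕ) (K : Type*) [Field K] (M : Type*) [AddCommGroup M]
    [Module (MvPolynomial (Fin n) K) M] : ℕ :=
  sSup {r | ∃ rs : List (MvPolynomial (Fin n) K), rs.length = r ∧
    (∀ x ∈ rs, x ∈ mxId n K) ∧ RingTheory.Sequence.IsRegular M rs}

/-- Krull dimension of a module: `dim S/ann M`. -/
noncomputable def mdim (n : ℕ) (K : Type*) [Field K] (M : Type*) [AddCommGroup M]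
    [Module (MvPolynomial (Fin n) K) M] : WithBot (WithTop ℕ) :=
  ringKrullDim (MvPolynomial (Fin n) K ⧸ Module.annihilator (MvPolynomial (Fin n) K) M)

/-- `M` is a Cohen–Macaulay `S`-module of dimension `j`. -/
noncomputable def IsCMof (n : ℕ) (K : Type*) [Field K] (M : Type*) [AddCommGroup M]
    [Module (MvPolynomial (Fin n) K) M] (j : ℕ) : Prop :=
  mdepth n K M = j ∧ mdim n K M = (j : WithBot (WithTop ℕ))

/-- `M` is a Cohen–Macaulay `S`-module (depth = Krull dimension). -/
noncomputable def IsCM (n : ℕ) (K : Type*) [Field K] (M : Type*) [AddCommGroup M]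
    [Module (MvPolynomial (Fin n) K) M] : Prop :=
  (mdepth n K M : WithBot (WithTop ℕ)) = mdim n K M

/-- A partition of a subset `P` of `ℕ^n` into (nonempty) intervals `[cᵢ, dᵢ]`. -/
structure IntervalPartition {n : ℕ} (P : Set (Fin n → ℕ)) where
  r : ℕ
  c : Fin r → (Fin n → ℕ)
  d : Fin r → (Fin n → ℕ)
  le : ∀ i, c i ≤ d i
  cover : P = ⋃ i, Set.Icc (c i) (d i)
  disj : Pairwise (Function.onFun Disjoint fun i => Set.Icc (c i) (d i))

/-- The (combinatorial) Stanley depth of `S/I`: the maximum over interval partitions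
of the characteristic poset `P^g_{S/I}` of `min_i ρ(dᵢ)` (Herzog–Vladoiu–Zheng). -/
noncomputable def sdepthQ {n : ℕ} (K : Type*) [Field K]
    (I : Ideal (MvPolynomial (Fin n) K)) (g : Fin n → ℕ) : ℕ :=
  sSup {t | ∃ P : IntervalPartition (charPoset K I g), ∀ i, t ≤ rho g (P.d i)}

/-- The set of exponents `{c + e : supp e ⊆ Z}`, i.e. the exponents of the monomials
spanning the Stanley space `x^c K[Z]`. -/
def orth {n : ℕ} (c : Fin n → ℕ) (Z : Finset (Fin n)) : Set (Fin n → ℕ) :=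
  {b | c ≤ b ∧ ∀ k ∉ Z, b k = c k}

/-- A Stanley decomposition of `J/I` (for monomial ideals `I ⊆ J`), encoded by the
induced partition of the monomial `K`-basis of `J/I` into Stanley spaces `x^{cᵢ} K[Zᵢ]`. -/
structure StanleyDec {n : ℕ} (K : Type*) [Field K]
    (I J : Ideal (MvPolynomial (Fin n) K)) where
  r : ℕ
  c : Fin r → (Fin n → ℕ)
  Z : Fin r → Finset (Fin n)
  cover : {b | monX n K b ∈ J ∧ monX n K b ∉ I} = ⋃ i, orth (c i) (Z i)
  disj : Pairwise (Function.onFun Disjoint fun i => orth (c i) (Z i))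

/-- The `h`-regularity of `J/I`: the minimum over Stanley decompositions of `max_i |cᵢ|`. -/
noncomputable def hregQ {n : ℕ} (K : Type*) [Field K]
    (I J : Ideal (MvPolynomial (Fin n) K)) : ℕ :=
  sInf {h | ∃ D : StanleyDec K I J, ∀ i, (∑ k, D.c i k) ≤ h}

/-- `σ(Pt) = max_i max{|c| : c ∈ [cᵢ,dᵢ], c k = cᵢ k for all k with dᵢ k = g k}`. -/
noncomputable def sigmaP {n : ℕ} (g : Fin n → ℕ) {P : Set (Fin n → ℕ)}
    (Pt : IntervalPartition P) : ℕ :=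
  sSup {s | ∃ i : Fin Pt.r, ∃ cc ∈ Set.Icc (Pt.c i) (Pt.d i),
    (∀ k, Pt.d i k = g k → cc k = Pt.c i k) ∧ s = ∑ k, cc k}

/-- The truncation `I_{≥ j}`: the ideal generated by all homogeneous elements of `I`
of degree at least `j`. -/
noncomputable def trunc {n : ℕ} (K : Type*) [Field K]
    (I : Ideal (MvPolynomial (Fin n) K)) (j : ℕ) : Ideal (MvPolynomial (Fin n) K) :=
  Ideal.span {f | f ∈ I ∧ ∃ d, j ≤ d ∧ MvPolynomial.IsHomogeneous f d}

/-- A `d`-linear (graded free) resolution of the ideal `I`: a finite exact complex of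
finite free modules augmented to `I`, in which the entries of the augmentation are
homogeneous of degree `d` and all entries of the differentials are linear forms. -/
structure LinearRes {n : ℕ} (K : Type*) [Field K]
    (I : Ideal (MvPolynomial (Fin n) K)) (d : ℕ) where
  len : ℕ
  b : ℕ → ℕ
  fin : ∀ i, len < i → b i = 0
  ε : (Fin (b 0) →₀ MvPolynomial (Fin n) K) →ₗ[MvPolynomial (Fin n) K]
      MvPolynomial (Fin n) K
  δ : ∀ i : ℕ, (Fin (b (i+1)) →₀ MvPolynomial (Fin n) K) →ₗ[MvPolynomial (Fin n) K]
      (Fin (b i) →₀ MvPolynomial (Fin n) K)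
  hε : ∀ j, MvPolynomial.IsHomogeneous (ε (Finsupp.single j 1)) d
  hδ : ∀ i j k, MvPolynomial.IsHomogeneous ((δ i (Finsupp.single j 1)) k) 1
  surj : LinearMap.range ε = (I : Submodule (MvPolynomial (Fin n) K) (MvPolynomial (Fin n) K))
  exact0 : LinearMap.ker ε = LinearMap.range (δ 0)
  exact : ∀ i, LinearMap.ker (δ i) = LinearMap.range (δ (i+1))

/-- The Castelnuovo–Mumford regularity of `I`, via the Eisenbud–Goto characterization
`reg(I) = min{d : I_{≥ d} has a d-linear resolution}`. -/
noncomputable def regEG {n : ℕ} (K : Type*) [Field K]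
    (I : Ideal (MvPolynomial (Fin n) K)) : ℕ :=
  sInf {d | Nonempty (LinearRes K (trunc K I d) d)}

/-!
Every point `b` of `P^g_{S/I_j}` has `ρ(b) ≤ j`, since `x^b ∈ I_j` as soon as `ρ(b) > j`. So a
partition of `P^g_{S/I_j}` with all `ρ(dᵢ) ≥ t` forces `t ≤ j` (unless `P^g_{S/I_j} = ∅`, where
`sdepth S/I_j = 0`). Conversely, as `I` is monomial, a monomial of `I_j` outside `I` is a multiple
of some `x^c` with `ρ(c) > j`, so the points of `P^g_{S/I} \ P^g_{S/I_j}` have `ρ > j ≥ t`.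
Adding them as singleton intervals turns the partition of `P^g_{S/I_j}` into one of `P^g_{S/I}`
with the same bound `t`.
-/

section

variable {n : ℕ} {K : Type*} [Field K]

lemma monX_eq_monomial (c : Fin n → ℕ) :
    monX n K c = monomial (Finsupp.equivFunOnFinite.symm c) 1 := by
  rw [monX, monomial_eq, C_1, one_mul, Finsupp.prod_fintype _ _ fun _ => pow_zero _]
  simp

lemma monX_mem_span_monX_image_iff {E : Set (Fin n → ℕ)} {b : Fin n → ℕ} :
    monX n K b ∈ Ideal.span (monX n K '' E) ↔ ∃ c ∈ E, c ≤ b := by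
  classical
  have himage : monX n K '' E =
      (fun s => monomial s (1 : K)) '' (Finsupp.equivFunOnFinite.symm '' E) := by
    rw [Set.image_image]
    exact Set.image_congr fun c _ => monX_eq_monomial c
  rw [himage, monX_eq_monomial, mem_ideal_span_monomial_image, support_monomial,
    if_neg one_ne_zero]
  simp only [Finset.mem_singleton, forall_eq, Set.exists_mem_image, Finsupp.le_def,
    Finsupp.coe_equivFunOnFinite_symm, Pi.le_def]

lemma rho_le (g b : Fin n → ℕ) : rho g b ≤ n :=
  (Finset.card_filter_le _ _).trans_eq (Finset.card_fin n)

lemma rho_mono {g b c : Fin n → ℕ} (hcb : c ≤ b) (hbg : b ≤ g) : rho g c ≤ rho g b :=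
  Finset.card_le_card fun k hk => by
    simp only [Finset.mem_filter, Finset.mem_univ, true_and] at hk ⊢
    exact le_antisymm (hbg k) (hk ▸ hcb k)

lemma charPoset_finite (I : Ideal (MvPolynomial (Fin n) K)) (g : Fin n → ℕ) :
    (charPoset K I g).Finite :=
  (Set.finite_Iic g).subset fun _ hb => hb.1

lemma charPoset_subset_of_le {I J : Ideal (MvPolynomial (Fin n) K)} (hIJ : I ≤ J)
    (g : Fin n → ℕ) : charPoset K J g ⊆ charPoset K I g :=
  fun _ hb => ⟨hb.1, fun hbI => hb.2 (hIJ hbI)⟩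

section Skeleton

variable {I : Ideal (MvPolynomial (Fin n) K)} {g : Fin n → ℕ} {j : ℕ}

lemma rho_le_of_mem_charPoset_skel {b : Fin n → ℕ} (hb : b ∈ charPoset K (skel K I g j) g) :
    rho g b ≤ j :=
  not_lt.mp fun hj => hb.2 (Ideal.mem_sup_right (Ideal.subset_span ⟨b, hj, rfl⟩))

lemma skel_span_monX_image (E : Set (Fin n → ℕ)) (g : Fin n → ℕ) (j : ℕ) :
    skel K (Ideal.span (monX n K '' E)) g j =
      Ideal.span (monX n K '' (E ∪ {b | j < rho g b})) := by
  rw [skel, Set.image_union, Ideal.span_union]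
  congr 2
  ext m
  simp [eq_comm]

lemma lt_rho_of_mem_charPoset_diff {E : Set (Fin n → ℕ)} (hI : I = Ideal.span (monX n K '' E))
    {b : Fin n → ℕ} (hb : b ∈ charPoset K I g \ charPoset K (skel K I g j) g) :
    j < rho g b := by
  obtain ⟨⟨hbg, hbI⟩, hbskel⟩ := hb
  have hmem : monX n K b ∈ skel K I g j := not_not.mp fun h => hbskel ⟨hbg, h⟩
  subst hI
  rw [skel_span_monX_image, monX_mem_span_monX_image_iff] at hmem
  obtain ⟨c, hcE | hc, hcb⟩ := hmem
  · exact absurd (monX_mem_span_monX_image_iff.mpr ⟨c, hcE, hcb⟩) hbI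
  · exact hc.trans_le (rho_mono hcb hbg)

end Skeleton

namespace IntervalPartition

variable {Q R : Set (Fin n → ℕ)}

lemma Icc_subset (P : IntervalPartition Q) (i : Fin P.r) : Set.Icc (P.c i) (P.d i) ⊆ Q :=
  (Set.subset_iUnion (fun i => Set.Icc (P.c i) (P.d i)) i).trans P.cover.symm.subset

lemma exists_mem_Icc (P : IntervalPartition Q) {b : Fin n → ℕ} (hb : b ∈ Q) :
    ∃ i, b ∈ Set.Icc (P.c i) (P.d i) :=
  Set.mem_iUnion.mp (P.cover ▸ hb)

lemma d_mem (P : IntervalPartition Q) (i : Fin P.r) : P.d i ∈ Q :=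
  P.Icc_subset i ⟨P.le i, le_rfl⟩

lemma le_of_forall_le (P : IntervalPartition Q) (hQ : Q.Nonempty) {f : (Fin n → ℕ) → ℕ}
    {t k : ℕ} (ht : ∀ i, t ≤ f (P.d i)) (hk : ∀ b ∈ Q, f b ≤ k) : t ≤ k := by
  obtain ⟨b, hb⟩ := hQ
  obtain ⟨i, -⟩ := P.exists_mem_Icc hb
  exact (ht i).trans (hk _ (P.d_mem i))

noncomputable def singletons (hR : R.Finite) : IntervalPartition R :=
  haveI := hR.to_subtype
  { r := Nat.card R
    c := fun i => (Finite.equivFin R).symm i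
    d := fun i => (Finite.equivFin R).symm i
    le := fun _ => le_rfl
    cover := by
      ext b
      simp only [Set.Icc_self, Set.mem_iUnion, Set.mem_singleton_iff]
      refine ⟨fun hb => ⟨Finite.equivFin R ⟨b, hb⟩, by rw [Equiv.symm_apply_apply]⟩, ?_⟩
      rintro ⟨i, rfl⟩
      exact Subtype.prop _
    disj := fun i i' hii' => by
      simp only [Function.onFun, Set.Icc_self, Set.disjoint_singleton, ne_eq,
        Subtype.coe_inj, EmbeddingLike.apply_eq_iff_eq]
      exact hii' }

def append (P : IntervalPartition Q) (P' : IntervalPartition (R \ Q)) (hQR : Q ⊆ R) :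
    IntervalPartition R where
  r := P.r + P'.r
  c := Fin.append P.c P'.c
  d := Fin.append P.d P'.d
  le := Fin.addCases (by simpa using P.le) (by simpa using P'.le)
  cover := by
    ext b
    rw [Set.mem_iUnion]
    constructor
    · intro hb
      by_cases hbQ : b ∈ Q
      · obtain ⟨i, hi⟩ := P.exists_mem_Icc hbQ
        exact ⟨Fin.castAdd _ i, by simpa using hi⟩
      · obtain ⟨i, hi⟩ := P'.exists_mem_Icc ⟨hb, hbQ⟩
        exact ⟨Fin.natAdd _ i, by simpa using hi⟩
    · rintro ⟨i, hi⟩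
      induction i using Fin.addCases with
      | left i => exact hQR (P.Icc_subset i (by simpa using hi))
      | right i => exact (P'.Icc_subset i (by simpa using hi)).1
  disj := by
    refine Fin.addCases (fun i => Fin.addCases (fun i' h => ?_) (fun i' _ => ?_))
      (fun i => Fin.addCases (fun i' _ => ?_) (fun i' h => ?_)) <;>
      simp only [Function.onFun, Fin.append_left, Fin.append_right]
    · exact P.disj fun hii' => h (hii' ▸ rfl)
    · exact Set.disjoint_sdiff_right.mono (P.Icc_subset i) (P'.Icc_subset i')
    · exact Set.disjoint_sdiff_left.mono (P'.Icc_subset i) (P.Icc_subset i')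
    · exact P'.disj fun hii' => h (hii' ▸ rfl)

lemma forall_d_append (P : IntervalPartition Q) (P' : IntervalPartition (R \ Q)) (hQR : Q ⊆ R)
    {p : (Fin n → ℕ) → Prop} :
    (∀ i, p ((P.append P' hQR).d i)) ↔ (∀ i, p (P.d i)) ∧ ∀ i, p (P'.d i) := by
  simp [append, Fin.forall_fin_add]

end IntervalPartition

lemma sdepthQ_eq_zero_of_charPoset_eq_empty {I : Ideal (MvPolynomial (Fin n) K)}
    {g : Fin n → ℕ} (h : charPoset K I g = ∅) : sdepthQ K I g = 0 := by
  let P := IntervalPartition.singletons (charPoset_finite I g)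
  rw [sdepthQ, csSup_of_not_bddAbove, csSup_empty, Nat.bot_eq_zero]
  exact not_bddAbove_iff.mpr fun t =>
    ⟨t + 1, ⟨P, fun i => absurd (P.d_mem i) (by simp [h])⟩, lt_add_one t⟩

lemma le_sdepthQ {I : Ideal (MvPolynomial (Fin n) K)} {g : Fin n → ℕ}
    (hne : (charPoset K I g).Nonempty) (P : IntervalPartition (charPoset K I g)) {t : ℕ}
    (ht : ∀ i, t ≤ rho g (P.d i)) : t ≤ sdepthQ K I g :=
  le_csSup ⟨n, fun _ ⟨P', hP'⟩ => P'.le_of_forall_le hne hP' fun b _ => rho_le g b⟩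
    ⟨P, ht⟩

end

theorem sdepth_skeleton_le_general (n m : ℕ) (K : Type*) [Field K]
    (a : Fin m → (Fin n → ℕ)) (I : Ideal (MvPolynomial (Fin n) K))
    (hI : I = Ideal.span (Set.range fun i => monX n K (a i)))
    (g : Fin n → ℕ) (j : ℕ) :
    sdepthQ K (skel K I g j) g ≤ sdepthQ K I g := by
  have hmon : I = Ideal.span (monX n K '' Set.range a) := by rw [hI, ← Set.range_comp]; rfl
  have hsub := charPoset_subset_of_le (le_sup_left : I ≤ skel K I g j) g
  rcases (charPoset K (skel K I g j) g).eq_empty_or_nonempty with hQ | hQ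
  · simp [sdepthQ_eq_zero_of_charPoset_eq_empty hQ]
  refine csSup_le' fun t ⟨P, hP⟩ => ?_
  have htj : t ≤ j := P.le_of_forall_le hQ hP fun _ => rho_le_of_mem_charPoset_skel
  let Pdiff : IntervalPartition (charPoset K I g \ charPoset K (skel K I g j) g) :=
    .singletons (charPoset_finite I g).sdiff
  have hPdiff (i : Fin Pdiff.r) : t ≤ rho g (Pdiff.d i) :=
    htj.trans (lt_rho_of_mem_charPoset_diff hmon (Pdiff.d_mem i)).le
  exact le_sdepthQ (hQ.mono hsub) (P.append Pdiff hsub)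
    ((P.forall_d_append Pdiff hsub (p := (t ≤ rho g ·))).mpr ⟨hP, hPdiff⟩)

/-- `sdepth S/I ≥ sdepth S/I_j` for all `0 ≤ j ≤ dim S/I`. -/
theorem sdepth_skeleton_le (n m : ℕ) (K : Type*) [Field K]
    (a : Fin m → (Fin n → ℕ)) (I : Ideal (MvPolynomial (Fin n) K))
    (hI : I = Ideal.span (Set.range fun i => monX n K (a i)))
    (hmin : ∀ i j, i ≠ j → ¬ a i ≤ a j)
    (g : Fin n → ℕ) (hg : ∀ i, a i ≤ g)
    (d : ℕ) (hd : ringKrullDim (MvPolynomial (Fin n) K ⧸ I) = (d : WithBot (WithTop ℕ))) (j : ℕ) (hj : j ≤ d) :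
    sdepthQ K (skel K I g j) g ≤ sdepthQ K I g :=
  sdepth_skeleton_le_general n m K a I hI g j
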